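/- For every function H : Fin 2 → Fin 2, it holds that (O_H ⊗ O_H) ψ = (1/√2)( e_{(0, H 0)} ⊗ u + u ⊗ e_{(0, H 0)} ), where u = (e_{(1,0)} + e_{(1,1)})/√2. In words: after both parties query the oracle for H once on the shared state ψ, the joint state equals the result of applying the cloning map φ ↦ (u ⊗ φ + φ ⊗ u)/√2 (with u playing the role of the orthogonal vector ⊥) to the basis vector |0, H(0)⟩. -/

import Mathlib

/- The oracle permutes the basis, keeping the first register and shifting the second by
`H` of the first. It therefore sends `e_{(0,0)}` to `e_{(0, H 0)}` and fixes `u = |1⟩⊗|+⟩`,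
whose coefficients depend only on the first register. Since `O_H ⊗ O_H` acts factorwise on
product vectors, linearity gives the claim. -/

open Matrix Kronecker

/-- Standard basis vector `e_{(x,y)}` of the two-qubit space `ℂ^4 = ℂ^{Fin 2 × Fin 2}`. -/
def e2 (x y : Fin 2) : Fin 2 × Fin 2 → ℂ :=
  fun p => if p = (x, y) then 1 else 0

/-- The oracle unitary `O_H`, determined by `O_H e_{(x,y)} = e_{(x, y + H x)}`. -/
def oracleU (H : Fin 2 → Fin 2) : Matrix (Fin 2 × Fin 2) (Fin 2 × Fin 2) ℂ :=
  fun p q => if p.1 = q.1 ∧ p.2 = q.2 + H q.1 then 1 else 0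

/-- The vector `u = |1⟩⊗|+⟩ = (e_{(1,0)} + e_{(1,1)})/√2`. -/
noncomputable def uVec : Fin 2 × Fin 2 → ℂ :=
  fun p => (e2 1 0 p + e2 1 1 p) / ((Real.sqrt 2 : ℝ) : ℂ)

/-- Kronecker (tensor) product of two vectors in `ℂ^4`. -/
def tensVec (v w : Fin 2 × Fin 2 → ℂ) : (Fin 2 × Fin 2) × (Fin 2 × Fin 2) → ℂ :=
  fun p => v p.1 * w p.2

/-- The shared state `ψ = (1/√2)(e_{(0,0)} ⊗ u + u ⊗ e_{(0,0)})`. -/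
noncomputable def psiVec : (Fin 2 × Fin 2) × (Fin 2 × Fin 2) → ℂ :=
  ((1 / (Real.sqrt 2 : ℝ) : ℝ) : ℂ) • (tensVec (e2 0 0) uVec + tensVec uVec (e2 0 0))

lemma kronecker_mulVec_tensVec (A B : Matrix (Fin 2 × Fin 2) (Fin 2 × Fin 2) ℂ)
    (v w : Fin 2 × Fin 2 → ℂ) :
    (A ⊗ₖ B) *ᵥ tensVec v w = tensVec (A *ᵥ v) (B *ᵥ w) := by
  funext p
  simp only [mulVec, dotProduct, tensVec, kroneckerMap_apply]
  rw [Finset.sum_mul_sum, Fintype.sum_prod_type]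
  exact Finset.sum_congr rfl fun a _ => Finset.sum_congr rfl fun b _ => by ring

lemma oracleU_mulVec_apply (H : Fin 2 → Fin 2) (v : Fin 2 × Fin 2 → ℂ) (p : Fin 2 × Fin 2) :
    (oracleU H *ᵥ v) p = v (p.1, p.2 - H p.1) := by
  have hsupp (q : Fin 2 × Fin 2) : (p.1 = q.1 ∧ p.2 = q.2 + H q.1) ↔ (p.1, p.2 - H p.1) = q := by
    rcases p with ⟨a, b⟩
    rcases q with ⟨c, d⟩
    simp only [Prod.mk.injEq, sub_eq_iff_eq_add]
    constructor <;> rintro ⟨rfl, h⟩ <;> exact ⟨rfl, h⟩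
  simp only [mulVec, dotProduct, oracleU, hsupp, ite_mul, one_mul, zero_mul,
    Finset.sum_ite_eq, Finset.mem_univ, if_true]

lemma oracleU_mulVec_e2 (H : Fin 2 → Fin 2) (x y : Fin 2) :
    oracleU H *ᵥ e2 x y = e2 x (y + H x) := by
  funext p
  rw [oracleU_mulVec_apply]
  rcases p with ⟨a, b⟩
  simp only [e2, Prod.mk.injEq, sub_eq_iff_eq_add]
  refine if_congr ?_ rfl rfl
  constructor <;> rintro ⟨rfl, h⟩ <;> exact ⟨rfl, h⟩

lemma uVec_apply (p : Fin 2 × Fin 2) :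
    uVec p = if p.1 = 1 then ((Real.sqrt 2 : ℝ) : ℂ)⁻¹ else 0 := by
  rcases p with ⟨a, b⟩
  fin_cases a <;> fin_cases b <;> simp [uVec, e2]

lemma oracleU_mulVec_uVec (H : Fin 2 → Fin 2) : oracleU H *ᵥ uVec = uVec := by
  funext p
  rw [oracleU_mulVec_apply, uVec_apply, uVec_apply]

/-- After both parties query the oracle for `H` once on `ψ`, the joint state equals the
cloning map `φ ↦ (u ⊗ φ + φ ⊗ u)/√2` applied to the basis vector `|0, H(0)⟩`. -/
theorem oracle_query_clones (H : Fin 2 → Fin 2) :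
    (oracleU H ⊗ₖ oracleU H) *ᵥ psiVec =
      ((1 / (Real.sqrt 2 : ℝ) : ℝ) : ℂ) •
        (tensVec (e2 0 (H 0)) uVec + tensVec uVec (e2 0 (H 0))) := by
  rw [psiVec, mulVec_smul, mulVec_add, kronecker_mulVec_tensVec, kronecker_mulVec_tensVec,
    oracleU_mulVec_e2, oracleU_mulVec_uVec, zero_add]
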